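/- arXiv:1004.1738 — 2 statements merged into one kernel-verified Lean document; each statement's English description precedes it below -/
import Mathlib

section
/- A formal series S ∈ K⟨⟨A⟩⟩ over a commutative ring K is recognizable if and only if there exists a finitely generated left K-submodule M of K⟨⟨A⟩⟩ containing S that is stable, i.e. x^{-1}(M) ⊆ M for all words x ∈ A*. -/
/-- A formal series S : A* → K is recognizable if there exist n ≥ 1, a monoid
homomorphism μ : A* → K^{n×n} and vectors λ, γ ∈ Kⁿ with
(S,x) = λᵀ μ(x) γ for all words x. -/
def Recognizable {A K : Type*} [Semiring K] (S : List A → K) : Prop :=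
  ∃ n : ℕ, 0 < n ∧ ∃ μ : List A → Matrix (Fin n) (Fin n) K,
    μ [] = 1 ∧ (∀ x y : List A, μ (x ++ y) = μ x * μ y) ∧
    ∃ l g : Fin n → K,
      ∀ x : List A, S x = dotProduct l ((μ x).mulVec g)

/-! Given a linear representation `(λ, μ, γ)` of `S`, the coordinates of `y ↦ μ(y) γ` span a
finitely generated module containing `S`, and `μ(xy) = μ(x) μ(y)` shows it is stable.
Conversely, if generators `s₁, …, sₙ` span a stable module, then each `a⁻¹ sᵢ` is a linear
combination `∑ⱼ m(a)ᵢⱼ sⱼ`; the vector `F(y) = (sᵢ(y))ᵢ` then satisfies `F(ay) = m(a) F(y)`,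
so `F(x) = μ(x) F(ε)` with `μ` the monoid morphism extending `m`, and `S = λ ⬝ F` for
the coefficients `λ` of `S`. -/

open Matrix

-- The padding by `0` makes the dimension positive, as `Recognizable` demands.
theorem Submodule.FG.exists_fin_succ_span_eq {R V : Type*} [Semiring R] [AddCommMonoid V]
    [Module R V] {M : Submodule R V} (hM : M.FG) :
    ∃ (n : ℕ) (s : Fin (n + 1) → V), Submodule.span R (Set.range s) = M := by
  obtain ⟨n, s, hs⟩ := Submodule.fg_iff_exists_fin_generating_family.mp hM
  exact ⟨n, Fin.cons 0 s, by rw [Fin.range_cons, Submodule.span_insert_zero, hs]⟩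

namespace FormalSeries

variable {A K ι : Type*} [Semiring K] [Fintype ι]

def IsStable (M : Submodule K (List A → K)) : Prop :=
  ∀ x : List A, ∀ T ∈ M, (fun y => T (x ++ y)) ∈ M

theorem mem_span_range_coord_iff {F : List A → ι → K} {T : List A → K} :
    T ∈ Submodule.span K (Set.range fun i y => F y i) ↔ ∃ l : ι → K, ∀ y, T y = l ⬝ᵥ F y := by
  rw [Submodule.mem_span_range_iff_exists_fun]
  simp only [funext_iff, Finset.sum_apply, Pi.smul_apply, smul_eq_mul, dotProduct]
  exact exists_congr fun l => forall_congr' fun y => eq_comm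

theorem isStable_span_range_coord_mulVec {μ : List A → Matrix ι ι K}
    (hμ : ∀ x y, μ (x ++ y) = μ x * μ y) (g : ι → K) :
    IsStable (Submodule.span K (Set.range fun i y => (μ y *ᵥ g) i)) := by
  intro x T hT
  obtain ⟨l, hl⟩ := mem_span_range_coord_iff.mp hT
  refine mem_span_range_coord_iff.mpr ⟨l ᵥ* μ x, fun y => ?_⟩
  rw [hl, hμ, ← mulVec_mulVec, dotProduct_mulVec]

theorem exists_fg_isStable_of_recognizable {S : List A → K} (hS : Recognizable S) :
    ∃ M : Submodule K (List A → K), M.FG ∧ S ∈ M ∧ IsStable M := by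
  obtain ⟨n, -, μ, -, hμ, l, g, hSl⟩ := hS
  exact ⟨_, Submodule.fg_span (Set.finite_range _),
    mem_span_range_coord_iff.mpr ⟨l, hSl⟩, isStable_span_range_coord_mulVec hμ g⟩

theorem apply_eq_prod_map_mulVec [DecidableEq ι] {F : List A → ι → K} {m : A → Matrix ι ι K}
    (hF : ∀ a y, F (a :: y) = m a *ᵥ F y) (x : List A) :
    F x = (x.map m).prod *ᵥ F [] := by
  induction x with
  | nil => simp
  | cons a x ih => rw [hF, ih, mulVec_mulVec, List.map_cons, List.prod_cons]

theorem recognizable_of_fg_of_isStable {S : List A → K} {M : Submodule K (List A → K)}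
    (hM : M.FG) (hSM : S ∈ M) (hstable : IsStable M) : Recognizable S := by
  obtain ⟨n, s, rfl⟩ := hM.exists_fin_succ_span_eq
  set F : List A → Fin (n + 1) → K := fun y i => s i y
  have hletter : ∀ a i, ∃ row : Fin (n + 1) → K, ∀ y, s i (a :: y) = row ⬝ᵥ F y :=
    fun a i => mem_span_range_coord_iff (F := F) |>.mp <|
      hstable [a] _ (Submodule.subset_span ⟨i, rfl⟩)
  choose m hm using hletter
  have hF := apply_eq_prod_map_mulVec (F := F) (m := fun a => Matrix.of (m a))
    fun a y => funext fun i => hm a i y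
  obtain ⟨l, hl⟩ := mem_span_range_coord_iff (F := F) |>.mp hSM
  exact ⟨n + 1, n.succ_pos, fun x => (x.map fun a => Matrix.of (m a)).prod, by simp,
    fun x y => by simp, l, F [], fun x => by rw [hl, hF]⟩

end FormalSeries

/-- A formal series S is recognizable iff it lies in some finitely generated
stable left K-submodule of K⟨⟨A⟩⟩, where stable means closed under all left
quotients x⁻¹T = (y ↦ T(x*y)). -/
theorem recognizable_iff_stable_fg_submodule {A K : Type*} [CommRing K]
    (S : List A → K) :
    Recognizable S ↔
      ∃ M : Submodule K (List A → K), M.FG ∧ S ∈ M ∧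
        ∀ x : List A, ∀ T ∈ M, (fun y => T (x ++ y)) ∈ M :=
  ⟨FormalSeries.exists_fg_isStable_of_recognizable,
    fun ⟨_, hM, hSM, hstable⟩ => FormalSeries.recognizable_of_fg_of_isStable hM hSM hstable⟩
end

section
/- Let (Y_n)_{n≥1} be a subadditive sequence of integrable random variables on an ergodic measure-preserving system (Ω, F, ℙ, θ), i.e. Y_{m+n} ≤ Y_m ∘ θ^n + Y_n a.s. for all m, n, and suppose inf_n (1/n)𝔼[Y_n] > -∞. Then Y_n/n converges almost surely to the constant β = inf_n (1/n)𝔼[Y_n]. -/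
/-!
Lower bound, by Steele's covering argument. Suppose that from almost every point some `f n`,
`n ≥ 1`, is at most `c n`. Cut `[0, L)` greedily into such stretches of length at most `N`, and
into single steps at the points where no such stretch starts. Subadditivity then bounds `f L` by
`c L`, plus a Birkhoff sum of `(f 1 - c)⁺` restricted to those uncovered points, plus the values
of `(f 1 - c)⁺` over the last `N` steps. Integrating and letting first `L → ∞`, then `N → ∞`,
gives `β ≤ c`. By ergodicity, the set where `f n < t n` infinitely often for every `t > a` is
null or conull. If `a < β` it cannot be conull, because the covering argument would then give
`β ≤ t` for some `t < β`. Hence `liminf f n / n ≥ β`. Birkhoff sums are additive, so this lower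
bound applied to `g` and `-g` is the pointwise ergodic theorem.

Upper bound. For each phase `1 ≤ i ≤ m`, split `[0, n)` into `[0, i)`, blocks of length `m`, and
a tail shorter than `2m`. Summed over the `m` phases, the blocks tile `[1, n')` with
`n - n' < 2m`. So `m f n` is at most a Birkhoff sum of `f m` plus `o(n)`, and the ergodic
theorem gives `limsup f n / n ≤ 𝔼 f m / m`.
-/

open Filter MeasureTheory Topology

theorem tendsto_comp_div_of_le_add {u : ℕ → ℝ} {a : ℝ} {N : ℕ → ℕ} {K : ℕ}
    (hu : Tendsto (fun n => u n / n) atTop (𝓝 a)) (hN : ∀ n, n ≤ N n + K ∧ N n ≤ n + K) :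
    Tendsto (fun n => u (N n) / n) atTop (𝓝 a) := by
  have hNtop : Tendsto N atTop atTop :=
    tendsto_atTop_atTop.2 fun b => ⟨b + K, fun n hn => by have := hN n; omega⟩
  have hgap : Tendsto (fun n : ℕ => ((N n : ℝ) - n) / n) atTop (𝓝 0) := by
    refine squeeze_zero_norm (fun n => ?_) (tendsto_const_div_atTop_nhds_zero_nat (K : ℝ))
    rw [norm_div, Real.norm_natCast, Real.norm_eq_abs]
    have h₁ : (n : ℝ) ≤ N n + K := by exact_mod_cast (hN n).1
    have h₂ : (N n : ℝ) ≤ n + K := by exact_mod_cast (hN n).2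
    gcongr
    exact abs_le.2 ⟨by linarith, by linarith⟩
  have hratio : Tendsto (fun n : ℕ => (N n : ℝ) / n) atTop (𝓝 1) := by
    refine (hgap.const_add 1).congr' ?_ |>.trans (by rw [add_zero])
    filter_upwards [eventually_ne_atTop 0] with n hn
    field_simp
    ring
  have := (hu.comp hNtop).mul hratio
  rw [mul_one] at this
  refine this.congr' ?_
  filter_upwards [hNtop.eventually_ne_atTop 0] with n hn
  simp only [Function.comp_apply]
  field_simp

theorem le_of_forall_mul_le_mul_add {b x y : ℝ} (h : ∀ L : ℕ, 1 ≤ L → b * L ≤ x * L + y) :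
    b ≤ x := by
  by_contra! hxb
  obtain ⟨L, hL⟩ := exists_nat_gt (max 1 (y / (b - x)))
  have hyL : y / (b - x) < L := (le_max_right _ _).trans_lt hL
  rw [div_lt_iff₀ (sub_pos.2 hxb)] at hyL
  have := h L (by exact_mod_cast (le_max_left _ _).trans hL.le)
  nlinarith

theorem ae_tendsto_of_ae_eventually_lt {Ω ι : Type*} [MeasurableSpace Ω] {μ : Measure Ω}
    {l : Filter ι} {u : ι → Ω → ℝ} {a : ℝ}
    (hlow : ∀ b < a, ∀ᵐ ω ∂μ, ∀ᶠ n in l, b < u n ω)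
    (hup : ∀ c > a, ∀ᵐ ω ∂μ, ∀ᶠ n in l, u n ω < c) :
    ∀ᵐ ω ∂μ, Tendsto (u · ω) l (𝓝 a) := by
  have hk : ∀ᵐ ω ∂μ, ∀ k : ℕ,
      (∀ᶠ n in l, a - 1 / (k + 1) < u n ω) ∧ ∀ᶠ n in l, u n ω < a + 1 / (k + 1) := by
    refine ae_all_iff.2 fun k => ?_
    have hk : (0 : ℝ) < 1 / (k + 1) := Nat.one_div_pos_of_nat
    filter_upwards [hlow (a - 1 / (k + 1)) (by linarith), hup (a + 1 / (k + 1)) (by linarith)]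
      with ω h₁ h₂ using ⟨h₁, h₂⟩
  filter_upwards [hk] with ω hω
  refine tendsto_order.2 ⟨fun b hb => ?_, fun c hc => ?_⟩
  · obtain ⟨k, hk⟩ := exists_nat_one_div_lt (sub_pos.2 hb)
    exact (hω k).1.mono fun n hn => by linarith
  · obtain ⟨k, hk⟩ := exists_nat_one_div_lt (sub_pos.2 hc)
    exact (hω k).2.mono fun n hn => by linarith

theorem MeasureTheory.MeasurePreserving.integral_comp_of_aestronglyMeasurable
    {α β E : Type*} [MeasurableSpace α] [MeasurableSpace β] [NormedAddCommGroup E]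
    [NormedSpace ℝ E] {μ : Measure α} {ν : Measure β} {f : α → β}
    (hf : MeasurePreserving f μ ν) {g : β → E} (hg : AEStronglyMeasurable g ν) :
    ∫ x, g (f x) ∂μ = ∫ y, g y ∂ν := by
  rw [← hf.map_eq] at hg ⊢
  exact (integral_map hf.measurable.aemeasurable hg).symm

section BirkhoffSum

variable {Ω : Type*} {T : Ω → Ω}

theorem birkhoffSum_mul_eq_sum_birkhoffSum_iterate {M : Type*} [AddCommMonoid M] (T : Ω → Ω)
    (g : Ω → M) (m k : ℕ) (x : Ω) :
    birkhoffSum T g (m * k) x = ∑ i ∈ Finset.range m, birkhoffSum T^[m] g k (T^[i] x) := by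
  induction k generalizing x with
  | zero => simp [birkhoffSum_zero]
  | succ k ih =>
    rw [Nat.mul_succ, add_comm, birkhoffSum_add, ih]
    simp only [birkhoffSum_succ', Finset.sum_add_distrib]
    congr 1
    refine Finset.sum_congr rfl fun i _ => ?_
    rw [Function.Commute.iterate_iterate_self T i m x]

variable [MeasurableSpace Ω] {μ : Measure Ω} {g : Ω → ℝ}

theorem measurable_birkhoffSum (hT : Measurable T) (hg : Measurable g) (n : ℕ) :
    Measurable (birkhoffSum T g n) :=
  Finset.measurable_sum _ fun k _ => hg.comp (hT.iterate k)

theorem integrable_birkhoffSum (hT : MeasurePreserving T μ μ) (hg : Integrable g μ) (n : ℕ) :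
    Integrable (birkhoffSum T g n) μ :=
  integrable_finsetSum _ fun k _ => (hT.iterate k).integrable_comp_of_integrable hg

theorem integral_birkhoffSum (hT : MeasurePreserving T μ μ) (hg : Integrable g μ) (n : ℕ) :
    ∫ ω, birkhoffSum T g n ω ∂μ = n * ∫ ω, g ω ∂μ := by
  simp only [birkhoffSum]
  rw [integral_finsetSum (f := fun k ω => g (T^[k] ω)) _
    fun k _ => (hT.iterate k).integrable_comp_of_integrable hg]
  simp [(hT.iterate _).integral_comp_of_aestronglyMeasurable hg.aestronglyMeasurable]

end BirkhoffSum

namespace Kingman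

variable {Ω : Type*} {T : Ω → Ω} {f : ℕ → Ω → ℝ}

def SubadditiveOnOrbit (T : Ω → Ω) (f : ℕ → Ω → ℝ) (ω : Ω) : Prop :=
  ∀ k m n, f (m + n) (T^[k] ω) ≤ f m (T^[n] (T^[k] ω)) + f n (T^[k] ω)

def excess (f : ℕ → Ω → ℝ) (c : ℝ) (x : Ω) : ℝ := max (f 1 x - c) 0

def uncovered (f : ℕ → Ω → ℝ) (c : ℝ) (N : ℕ) : Set Ω :=
  ⋂ n ∈ Finset.Icc 1 N, {x | c * n < f n x}

theorem excess_nonneg (c : ℝ) (x : Ω) : 0 ≤ excess f c x := le_max_right _ _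

theorem le_add_excess (c : ℝ) (x : Ω) : f 1 x ≤ c + excess f c x := by
  rw [excess]
  linarith [le_max_left (f 1 x - c) 0]

theorem birkhoffSum_indicator_uncovered_nonneg (c : ℝ) (N n : ℕ) (x : Ω) :
    0 ≤ birkhoffSum T ((uncovered f c N).indicator (excess f c)) n x :=
  Finset.sum_nonneg fun _ _ => Set.indicator_nonneg (fun _ _ => excess_nonneg c _) _

theorem exists_le_birkhoffSum_or_lt (c : ℝ) (N : ℕ) {L : ℕ} (hL : 1 ≤ L) (ω : Ω) :
    (∃ φ, 1 ≤ φ ∧ φ ≤ L ∧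
      f φ ω ≤ c * φ + birkhoffSum T ((uncovered f c N).indicator (excess f c)) φ ω) ∨ L < N := by
  by_cases hω : ω ∈ uncovered f c N
  · refine Or.inl ⟨1, le_rfl, hL, ?_⟩
    rw [birkhoffSum_one, Set.indicator_of_mem hω, Nat.cast_one, mul_one]
    exact le_add_excess c ω
  · simp only [uncovered, Set.mem_iInter, Set.mem_ofPred_eq, Finset.mem_Icc, not_forall,
      not_lt] at hω
    obtain ⟨n, ⟨hn1, hnN⟩, hn⟩ := hω
    by_cases hnL : n ≤ L
    · exact Or.inl ⟨n, hn1, hnL,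
        le_add_of_le_of_nonneg hn (birkhoffSum_indicator_uncovered_nonneg c N n ω)⟩
    · exact Or.inr (by omega)

namespace SubadditiveOnOrbit

variable {ω : Ω}

theorem le_add (h : SubadditiveOnOrbit T f ω) (m n : ℕ) :
    f (m + n) ω ≤ f m (T^[n] ω) + f n ω :=
  h 0 m n

theorem iterate (h : SubadditiveOnOrbit T f ω) (j : ℕ) : SubadditiveOnOrbit T f (T^[j] ω) := by
  intro k m n
  simpa only [← Function.iterate_add_apply] using h (k + j) m n

theorem le_birkhoffSum_one (h : SubadditiveOnOrbit T f ω) {L : ℕ} (hL : 1 ≤ L) :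
    f L ω ≤ birkhoffSum T (f 1) L ω := by
  induction L, hL using Nat.le_induction generalizing ω with
  | base => rw [birkhoffSum_one]
  | succ L _ ih =>
    have h₁ := ih (h.iterate 1)
    have h₂ := h.le_add L 1
    rw [Function.iterate_one] at h₁ h₂
    rw [birkhoffSum_succ']
    linarith

theorem le_birkhoffSum_iterate_add (h : SubadditiveOnOrbit T f ω) (m k r : ℕ) :
    f (m * k + r) ω ≤ birkhoffSum T^[m] (f m) k ω + f r (T^[m * k] ω) := by
  induction k generalizing ω with
  | zero => simp
  | succ k ih =>
    have := ih (h.iterate m)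
    rw [show m * (k + 1) + r = m * k + r + m by ring, birkhoffSum_succ', Nat.mul_succ,
      Function.iterate_add_apply]
    linarith [h.le_add (m * k + r) m]

theorem mul_le_sum_phases (h : SubadditiveOnOrbit T f ω) (m k s : ℕ) :
    m * f (m * k + m + s) ω ≤ ∑ i ∈ Finset.range m, f (i + 1) ω
      + birkhoffSum T (f m) (m * k) (T ω)
      + ∑ i ∈ Finset.range m, f (m - 1 - i + s) (T^[m * k] (T^[i] (T ω))) := by
  have hphase : ∀ i ∈ Finset.range m, f (m * k + m + s) ω ≤ f (i + 1) ω
      + birkhoffSum T^[m] (f m) k (T^[i] (T ω))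
      + f (m - 1 - i + s) (T^[m * k] (T^[i] (T ω))) := by
    intro i hi
    have hi : i < m := Finset.mem_range.1 hi
    have h₁ := h.le_add (m * k + (m - 1 - i + s)) (i + 1)
    have h₂ := (h.iterate (i + 1)).le_birkhoffSum_iterate_add m k (m - 1 - i + s)
    rw [show m * k + (m - 1 - i + s) + (i + 1) = m * k + m + s by omega] at h₁
    rw [Function.iterate_succ_apply] at h₁ h₂
    linarith
  calc (m : ℝ) * f (m * k + m + s) ω = ∑ i ∈ Finset.range m, f (m * k + m + s) ω := by simp
    _ ≤ _ := Finset.sum_le_sum hphase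
    _ = _ := by
      rw [birkhoffSum_mul_eq_sum_birkhoffSum_iterate, Finset.sum_add_distrib,
        Finset.sum_add_distrib]

theorem mul_le_birkhoffSum (h : SubadditiveOnOrbit T f ω) {m s : ℕ} (hs : s < m) (k : ℕ) :
    m * f (m * k + m + s) ω ≤ ∑ i ∈ Finset.range m, f (i + 1) ω
      + birkhoffSum T (f m) (m * k) (T ω)
      + (birkhoffSum T (fun x => ∑ r ∈ Finset.range (2 * m), max (f r x) 0) (m * k + m) (T ω)
        - birkhoffSum T (fun x => ∑ r ∈ Finset.range (2 * m), max (f r x) 0) (m * k) (T ω)) := by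
  set F : Ω → ℝ := fun x => ∑ r ∈ Finset.range (2 * m), max (f r x) 0
  have htail : ∀ i ∈ Finset.range m,
      f (m - 1 - i + s) (T^[m * k] (T^[i] (T ω))) ≤ F (T^[i] (T^[m * k] (T ω))) := by
    intro i hi
    rw [Function.Commute.iterate_iterate_self T (m * k) i (T ω)]
    refine (le_max_left _ 0).trans (Finset.single_le_sum
      (f := fun r => max (f r (T^[i] (T^[m * k] (T ω)))) 0)
      (fun r _ => le_max_right _ _) (Finset.mem_range.2 ?_))
    have := Finset.mem_range.1 hi
    omega
  have hF : birkhoffSum T F (m * k + m) (T ω) - birkhoffSum T F (m * k) (T ω)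
      = ∑ i ∈ Finset.range m, F (T^[i] (T^[m * k] (T ω))) := by
    rw [birkhoffSum_add, add_sub_cancel_left, birkhoffSum]
  linarith [h.mul_le_sum_phases m k s, Finset.sum_le_sum htail]

theorem le_covering_bound (h : SubadditiveOnOrbit T f ω) (c : ℝ) (N : ℕ) {L : ℕ} (hL : 1 ≤ L) :
    f L ω ≤ c * L + birkhoffSum T ((uncovered f c N).indicator (excess f c)) L ω
      + ∑ k ∈ Finset.Ico (L - N) L, excess f c (T^[k] ω) := by
  induction L using Nat.strong_induction_on generalizing ω with
  | _ L ih =>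
  have hwin : 0 ≤ ∑ k ∈ Finset.Ico (L - N) L, excess f c (T^[k] ω) :=
    Finset.sum_nonneg fun k _ => excess_nonneg c _
  obtain ⟨φ, hφ1, hφL, hφ⟩ | hLN := exists_le_birkhoffSum_or_lt (T := T) c N hL ω
  · rcases hφL.eq_or_lt with rfl | hφL
    · linarith
    obtain ⟨L', rfl⟩ : ∃ L', L = φ + L' := ⟨L - φ, by omega⟩
    have hrest := ih L' (by omega) (h.iterate φ) (by omega)
    have hwin' : ∑ k ∈ Finset.Ico (L' - N) L', excess f c (T^[k] (T^[φ] ω))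
        ≤ ∑ k ∈ Finset.Ico (φ + L' - N) (φ + L'), excess f c (T^[k] ω) := by
      simp only [← Function.iterate_add_apply,
        Finset.sum_Ico_add' (fun k => excess f c (T^[k] ω))]
      exact Finset.sum_le_sum_of_subset_of_nonneg (Finset.Ico_subset_Ico (by omega) (by omega))
        fun k _ _ => excess_nonneg c _
    have hsplit := h.le_add L' φ
    rw [add_comm L' φ] at hsplit
    rw [birkhoffSum_add]
    push_cast
    linarith
  · have hsteps : birkhoffSum T (f 1) L ω
        ≤ c * L + ∑ k ∈ Finset.Ico (L - N) L, excess f c (T^[k] ω) := by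
      rw [show L - N = 0 by omega, ← Finset.range_eq_Ico, birkhoffSum]
      calc ∑ k ∈ Finset.range L, f 1 (T^[k] ω)
          ≤ ∑ k ∈ Finset.range L, (c + excess f c (T^[k] ω)) :=
            Finset.sum_le_sum fun k _ => le_add_excess c _
        _ = _ := by simp [Finset.sum_add_distrib, mul_comm]
    have hu : 0 ≤ birkhoffSum T ((uncovered f c N).indicator (excess f c)) L ω :=
      birkhoffSum_indicator_uncovered_nonneg c N L ω
    linarith [h.le_birkhoffSum_one hL]

end SubadditiveOnOrbit

theorem frequently_lt_mul_of_frequently_lt_mul_apply {ω : Ω}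
    (hω : ∀ n, f (n + 1) ω ≤ f n (T ω) + f 1 ω) {t' t : ℝ} (ht : t' < t)
    (h : ∃ᶠ n in atTop, f n (T ω) < t' * n) : ∃ᶠ n in atTop, f n ω < t * n := by
  have hlarge : ∀ᶠ n : ℕ in atTop, f 1 ω - t ≤ (t - t') * n :=
    (tendsto_natCast_atTop_atTop.const_mul_atTop (sub_pos.2 ht)).eventually_ge_atTop _
  refine (tendsto_add_atTop_nat 1).frequently ((h.and_eventually hlarge).mono ?_)
  rintro n ⟨h₁, h₂⟩
  push_cast
  linarith [hω n]

variable [MeasurableSpace Ω] {μ : Measure Ω}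

theorem ae_subadditiveOnOrbit (hT : Measure.QuasiMeasurePreserving T μ μ)
    (hSub : ∀ m n, ∀ᵐ ω ∂μ, f (m + n) ω ≤ f m (T^[n] ω) + f n ω) :
    ∀ᵐ ω ∂μ, SubadditiveOnOrbit T f ω := by
  have h : ∀ᵐ ω ∂μ, ∀ m n, f (m + n) ω ≤ f m (T^[n] ω) + f n ω :=
    ae_all_iff.2 fun m => ae_all_iff.2 (hSub m)
  filter_upwards [ae_all_iff.2 fun k => (hT.iterate k).ae h] with ω hω k
  exact hω k

theorem measurableSet_uncovered (hm : ∀ n, Measurable (f n)) (c : ℝ) (N : ℕ) :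
    MeasurableSet (uncovered f c N) :=
  Finset.measurableSet_biInter _ fun n _ => measurableSet_lt measurable_const (hm n)

theorem integrable_excess [IsFiniteMeasure μ] (hi : Integrable (f 1) μ) (c : ℝ) :
    Integrable (excess f c) μ :=
  (hi.sub (integrable_const c)).sup (integrable_const 0)

variable [IsProbabilityMeasure μ]

theorem integral_le_covering_bound (hT : MeasurePreserving T μ μ) (hm : ∀ n, Measurable (f n))
    (hi : ∀ n, Integrable (f n) μ) (hSub : ∀ m n, ∀ᵐ ω ∂μ, f (m + n) ω ≤ f m (T^[n] ω) + f n ω)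
    (c : ℝ) (N : ℕ) {L : ℕ} (hL : 1 ≤ L) :
    ∫ ω, f L ω ∂μ ≤ c * L + L * ∫ ω, (uncovered f c N).indicator (excess f c) ω ∂μ
      + N * ∫ ω, excess f c ω ∂μ := by
  set u := (uncovered f c N).indicator (excess f c)
  have hw := integrable_excess (hi 1) c
  have hu : Integrable u μ := hw.indicator (measurableSet_uncovered hm c N)
  have hSu := integrable_birkhoffSum hT hu L
  have hwk : ∀ k, Integrable (fun ω => excess f c (T^[k] ω)) μ :=
    fun k => (hT.iterate k).integrable_comp_of_integrable hw
  have hwin : ∫ ω, ∑ k ∈ Finset.Ico (L - N) L, excess f c (T^[k] ω) ∂μ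
      ≤ N * ∫ ω, excess f c ω ∂μ := by
    rw [integral_finsetSum _ fun k _ => hwk k]
    simp only [(hT.iterate _).integral_comp_of_aestronglyMeasurable hw.aestronglyMeasurable,
      Finset.sum_const, Nat.card_Ico, nsmul_eq_mul]
    gcongr
    · exact integral_nonneg (excess_nonneg c)
    · omega
  calc ∫ ω, f L ω ∂μ
      ≤ ∫ ω, (c * L + birkhoffSum T u L ω
          + ∑ k ∈ Finset.Ico (L - N) L, excess f c (T^[k] ω)) ∂μ := by
        refine integral_mono_ae (hi L) (((integrable_const _).add hSu).add
          (integrable_finsetSum _ fun k _ => hwk k)) ?_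
        filter_upwards [ae_subadditiveOnOrbit hT.quasiMeasurePreserving hSub] with ω hω
        exact hω.le_covering_bound c N hL
    _ = c * L + L * ∫ ω, u ω ∂μ
          + ∫ ω, ∑ k ∈ Finset.Ico (L - N) L, excess f c (T^[k] ω) ∂μ := by
        rw [integral_add _ (integrable_finsetSum _ fun k _ => hwk k),
          integral_add (integrable_const _) hSu, integral_const, integral_birkhoffSum hT hu]
        · simp
        · exact (integrable_const _).add hSu
    _ ≤ _ := by linarith

theorem le_of_ae_exists_le_mul (hT : MeasurePreserving T μ μ) (hm : ∀ n, Measurable (f n))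
    (hi : ∀ n, Integrable (f n) μ) (hSub : ∀ m n, ∀ᵐ ω ∂μ, f (m + n) ω ≤ f m (T^[n] ω) + f n ω)
    {b c : ℝ} (hb : ∀ L, 1 ≤ L → b * L ≤ ∫ ω, f L ω ∂μ)
    (hcov : ∀ᵐ ω ∂μ, ∃ n, 1 ≤ n ∧ f n ω ≤ c * n) : b ≤ c := by
  set u := fun N => (uncovered f c N).indicator (excess f c)
  have hw := integrable_excess (hi 1) c
  have hbN : ∀ N, b ≤ c + ∫ ω, u N ω ∂μ := fun N =>
    le_of_forall_mul_le_mul_add (y := N * ∫ ω, excess f c ω ∂μ) fun L hL => by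
      linarith [hb L hL, integral_le_covering_bound hT hm hi hSub c N hL]
  have hlim : Tendsto (fun N => ∫ ω, u N ω ∂μ) atTop (𝓝 0) := by
    have := tendsto_integral_of_dominated_convergence (f := 0) (excess f c)
      (fun N => (hw.indicator (measurableSet_uncovered hm c N)).aestronglyMeasurable) hw
      (fun N => ae_of_all _ fun x => ?_) ?_
    · simpa using this
    · rw [Real.norm_eq_abs, abs_of_nonneg (Set.indicator_nonneg (fun _ _ => excess_nonneg c _) _)]
      exact Set.indicator_le_self' (fun _ _ => excess_nonneg c _) x
    · filter_upwards [hcov] with x ⟨n, hn1, hn⟩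
      refine tendsto_const_nhds.congr' (eventually_ge_atTop n |>.mono fun N hN => ?_)
      refine (Set.indicator_of_notMem ?_ _).symm
      simp only [uncovered, Set.mem_iInter, Set.mem_ofPred_eq, Finset.mem_Icc, not_forall,
        not_lt]
      exact ⟨n, ⟨hn1, hN⟩, hn⟩
  simpa using ge_of_tendsto' (tendsto_const_nhds.add hlim) hbN

theorem ae_eventually_lt_div_of_le_integral (hErg : Ergodic T μ) (hm : ∀ n, Measurable (f n))
    (hi : ∀ n, Integrable (f n) μ) (hSub : ∀ m n, ∀ᵐ ω ∂μ, f (m + n) ω ≤ f m (T^[n] ω) + f n ω)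
    {b : ℝ} (hb : ∀ L, 1 ≤ L → b * L ≤ ∫ ω, f L ω ∂μ) {a : ℝ} (ha : a < b) :
    ∀ᵐ ω ∂μ, ∀ᶠ n in atTop, a < f n ω / n := by
  obtain ⟨V, hV, hVmem⟩ : ∃ V : Set Ω, MeasurableSet V ∧
      ∀ ω, ω ∈ V ↔ ∀ t : ℚ, a < t → ∃ᶠ n in atTop, f n ω < t * n :=
    ⟨⋂ (t : ℚ) (_ : a < t), limsup (fun n : ℕ => {ω | f n ω < t * n}) atTop,
      .iInter fun t => .iInter fun _ =>
        .measurableSet_limsup fun n => measurableSet_lt (hm n) measurable_const,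
      fun ω => by simp only [Set.mem_iInter, mem_limsup_iff_frequently_mem, Set.mem_ofPred_eq]⟩
  have hVinv : T ⁻¹' V ≤ᵐ[μ] V := by
    filter_upwards [ae_all_iff.2 fun n => hSub n 1] with ω hω hTω
    refine (hVmem ω).2 fun t hat => ?_
    obtain ⟨t', hat', ht't⟩ := exists_rat_btwn (show a < (t : ℝ) from hat)
    exact frequently_lt_mul_of_frequently_lt_mul_apply (fun n => by simpa using hω n) ht't
      ((hVmem (T ω)).1 hTω t' hat')
  rcases hErg.ae_empty_or_univ_of_preimage_ae_le' hV.nullMeasurableSet hVinv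
    (measure_ne_top μ V) with h | h
  · filter_upwards [measure_eq_zero_iff_ae_notMem.1 (ae_eq_empty.1 h)] with ω hω
    simp only [hVmem, not_forall, not_frequently, not_lt] at hω
    obtain ⟨t, hat, ht⟩ := hω
    filter_upwards [ht, eventually_gt_atTop 0] with n hn hn0
    rw [lt_div_iff₀ (by exact_mod_cast hn0)]
    calc a * n < t * n := by gcongr
      _ ≤ f n ω := hn
  · obtain ⟨t, hat, htb⟩ := exists_rat_btwn ha
    have hcov : ∀ᵐ ω ∂μ, ∃ n, 1 ≤ n ∧ f n ω ≤ t * n := by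
      filter_upwards [mem_ae_iff.2 (ae_eq_univ.1 h)] with ω hω
      obtain ⟨n, hn1, hn⟩ := ((hVmem ω).1 hω t hat).forall_exists_of_atTop 1
      exact ⟨n, hn1, hn.le⟩
    exact absurd (le_of_ae_exists_le_mul hErg.toMeasurePreserving hm hi hSub hb hcov)
      (not_le.2 htb)

theorem ae_tendsto_birkhoffSum_div (hErg : Ergodic T μ) {g : Ω → ℝ} (hgm : Measurable g)
    (hg : Integrable g μ) :
    ∀ᵐ ω ∂μ, Tendsto (fun n : ℕ => birkhoffSum T g n ω / n) atTop (𝓝 (∫ ω, g ω ∂μ)) := by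
  have hT := hErg.toMeasurePreserving
  have hlow : ∀ g : Ω → ℝ, Measurable g → Integrable g μ → ∀ a < ∫ ω, g ω ∂μ,
      ∀ᵐ ω ∂μ, ∀ᶠ n in atTop, a < birkhoffSum T g n ω / n := fun g hgm hg a ha =>
    ae_eventually_lt_div_of_le_integral hErg (measurable_birkhoffSum hT.measurable hgm)
      (integrable_birkhoffSum hT hg)
      (fun m n => ae_of_all _ fun ω => by rw [add_comm m n, birkhoffSum_add, add_comm])
      (fun L _ => by rw [integral_birkhoffSum hT hg, mul_comm]) ha
  refine ae_tendsto_of_ae_eventually_lt (hlow g hgm hg) fun c hc => ?_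
  have hneg : -c < ∫ ω, (-g) ω ∂μ := by simp only [Pi.neg_apply, integral_neg]; linarith
  filter_upwards [hlow (-g) hgm.neg hg.neg (-c) hneg] with ω hω
  filter_upwards [hω] with n hn
  rw [birkhoffSum_neg, neg_div] at hn
  linarith

theorem ae_eventually_div_lt_of_integral_lt (hErg : Ergodic T μ) (hm : ∀ n, Measurable (f n))
    (hi : ∀ n, Integrable (f n) μ) (hSub : ∀ m n, ∀ᵐ ω ∂μ, f (m + n) ω ≤ f m (T^[n] ω) + f n ω)
    {m : ℕ} (hm0 : 0 < m) {c : ℝ} (hc : ∫ ω, f m ω ∂μ < c * m) :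
    ∀ᵐ ω ∂μ, ∀ᶠ n in atTop, f n ω / n < c := by
  have hT := hErg.toMeasurePreserving
  set F : Ω → ℝ := fun x => ∑ r ∈ Finset.range (2 * m), max (f r x) 0
  have hF := ae_tendsto_birkhoffSum_div hErg (g := F)
    (Finset.measurable_sum _ fun r _ => (hm r).max measurable_const)
    (integrable_finsetSum _ fun r _ => (hi r).sup (integrable_const 0))
  filter_upwards [ae_subadditiveOnOrbit hT.quasiMeasurePreserving hSub,
    hT.quasiMeasurePreserving.ae (ae_tendsto_birkhoffSum_div hErg (hm m) (hi m)),
    hT.quasiMeasurePreserving.ae hF] with ω hω hfω hFω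
  have hdiv : ∀ n, m * (n / m - 1) = m * (n / m) - m ∧ m * (n / m) + n % m = n ∧ n % m < m :=
    fun n => ⟨Nat.mul_sub_one m (n / m), Nat.div_add_mod n m, Nat.mod_lt n hm0⟩
  have hshift : ∀ j ≤ m, ∀ n, n ≤ m * (n / m - 1) + j + 2 * m ∧ m * (n / m - 1) + j ≤ n + 2 * m :=
    fun j hj n => by have := hdiv n; omega
  set H := ∑ i ∈ Finset.range m, f (i + 1) ω
  have hlim : Tendsto (fun n : ℕ => H / n + birkhoffSum T (f m) (m * (n / m - 1)) (T ω) / n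
      + (birkhoffSum T F (m * (n / m - 1) + m) (T ω) / n
        - birkhoffSum T F (m * (n / m - 1)) (T ω) / n)) atTop
      (𝓝 (0 + ∫ ω, f m ω ∂μ + ((∫ ω, F ω ∂μ) - ∫ ω, F ω ∂μ))) :=
    ((tendsto_const_div_atTop_nhds_zero_nat H).add
      (tendsto_comp_div_of_le_add hfω (by simpa using hshift 0 (Nat.zero_le m)))).add
      ((tendsto_comp_div_of_le_add hFω (hshift m le_rfl)).sub
        (tendsto_comp_div_of_le_add hFω (by simpa using hshift 0 (Nat.zero_le m))))
  have hlt : 0 + ∫ ω, f m ω ∂μ + ((∫ ω, F ω ∂μ) - ∫ ω, F ω ∂μ) < c * m := by linarith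
  filter_upwards [hlim.eventually_lt_const hlt, eventually_ge_atTop m] with n hn hnm
  have hbound := hω.mul_le_birkhoffSum (hdiv n).2.2 (n / m - 1)
  have hmn : m ≤ m * (n / m) := Nat.le_mul_of_pos_right m (Nat.div_pos hnm hm0)
  rw [show m * (n / m - 1) + m + n % m = n by have := hdiv n; omega] at hbound
  have hn0 : (0 : ℝ) < n := by exact_mod_cast (show 0 < n by omega)
  have hm0' : (0 : ℝ) < m := by exact_mod_cast hm0
  rw [← add_div, ← sub_div, ← add_div, div_lt_iff₀ hn0] at hn
  rw [div_lt_iff₀ hn0]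
  nlinarith

theorem ae_tendsto_div_iInf (hErg : Ergodic T μ) (hm : ∀ n, Measurable (f n))
    (hi : ∀ n, Integrable (f n) μ) (hSub : ∀ m n, ∀ᵐ ω ∂μ, f (m + n) ω ≤ f m (T^[n] ω) + f n ω)
    (hbdd : BddBelow (Set.range fun n : ℕ+ => (∫ ω, f n ω ∂μ) / n)) :
    ∀ᵐ ω ∂μ, Tendsto (fun n : ℕ => f n ω / n) atTop (𝓝 (⨅ n : ℕ+, (∫ ω, f n ω ∂μ) / n)) := by
  refine ae_tendsto_of_ae_eventually_lt (fun a ha => ?_) fun c hc => ?_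
  · refine ae_eventually_lt_div_of_le_integral hErg hm hi hSub (fun L hL => ?_) ha
    rw [← le_div_iff₀ (by exact_mod_cast hL)]
    exact ciInf_le hbdd ⟨L, hL⟩
  · obtain ⟨m, hmc⟩ := exists_lt_of_ciInf_lt hc
    rw [div_lt_iff₀ (by exact_mod_cast m.pos)] at hmc
    exact ae_eventually_div_lt_of_integral_lt hErg hm hi hSub m.pos hmc

end Kingman

theorem kingman_subadditive_ergodic_general {Ω : Type*} [MeasurableSpace Ω]
    (ℙ : Measure Ω) [IsProbabilityMeasure ℙ]
    (θ : Ω → Ω) (hErg : Ergodic θ ℙ)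
    (Y : ℕ → Ω → ℝ) (hInt : ∀ n, Integrable (Y n) ℙ)
    (hSub : ∀ m n : ℕ, ∀ᵐ ω ∂ℙ, Y (m + n) ω ≤ Y m (θ^[n] ω) + Y n ω)
    (hBdd : ∃ C : ℝ, ∀ n : ℕ+, C ≤ (∫ ω, Y n ω ∂ℙ) / (n : ℝ)) :
    ∀ᵐ ω ∂ℙ, Tendsto (fun n : ℕ => Y n ω / (n : ℝ)) atTop
      (nhds (⨅ n : ℕ+, (∫ ω, Y n ω ∂ℙ) / (n : ℝ))) := by
  obtain ⟨f, hfm, hYf⟩ : ∃ f : ℕ → Ω → ℝ, (∀ n, Measurable (f n)) ∧ ∀ n, Y n =ᵐ[ℙ] f n :=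
    ⟨fun n => (hInt n).1.mk (Y n), fun n => (hInt n).1.stronglyMeasurable_mk.measurable,
      fun n => (hInt n).1.ae_eq_mk⟩
  have hf : ∀ n, ∫ ω, f n ω ∂ℙ = ∫ ω, Y n ω ∂ℙ := fun n => integral_congr_ae (hYf n).symm
  have hfSub : ∀ m n, ∀ᵐ ω ∂ℙ, f (m + n) ω ≤ f m (θ^[n] ω) + f n ω := fun m n => by
    filter_upwards [hSub m n, hYf (m + n), hYf n,
      (hErg.toMeasurePreserving.iterate n).quasiMeasurePreserving.ae (hYf m)] with ω h h₁ h₂ h₃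
    rwa [← h₁, ← h₂, ← h₃]
  obtain ⟨C, hC⟩ := hBdd
  have hlim := Kingman.ae_tendsto_div_iInf hErg hfm (fun n => (hInt n).congr (hYf n)) hfSub
    ⟨C, by rintro _ ⟨n, rfl⟩; simpa only [hf] using hC n⟩
  simp only [hf] at hlim
  filter_upwards [hlim, ae_all_iff.2 hYf] with ω h hω
  simpa only [hω] using h

/-- Kingman's subadditive ergodic theorem (ergodic case): for a subadditive
sequence of integrable random variables over an ergodic measure-preserving
system, with inf_n (1/n)𝔼[Yₙ] > -∞, the quotients Yₙ/n converge almost surely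
to the constant β = inf_{n≥1} (1/n)𝔼[Yₙ]. -/
theorem kingman_subadditive_ergodic {Ω : Type*} [MeasurableSpace Ω]
    (ℙ : Measure Ω) [IsProbabilityMeasure ℙ]
    (θ : Ω → Ω) (hθ : MeasurePreserving θ ℙ ℙ) (hErg : Ergodic θ ℙ)
    (Y : ℕ → Ω → ℝ) (hInt : ∀ n, Integrable (Y n) ℙ)
    (hSub : ∀ m n : ℕ, ∀ᵐ ω ∂ℙ, Y (m + n) ω ≤ Y m (θ^[n] ω) + Y n ω)
    (hBdd : ∃ C : ℝ, ∀ n : ℕ+, C ≤ (∫ ω, Y n ω ∂ℙ) / (n : ℝ)) :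
    ∀ᵐ ω ∂ℙ, Tendsto (fun n : ℕ => Y n ω / (n : ℝ)) atTop
      (nhds (⨅ n : ℕ+, (∫ ω, Y n ω ∂ℙ) / (n : ℝ))) :=
  kingman_subadditive_ergodic_general ℙ θ hErg Y hInt hSub hBdd
end
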